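/- arXiv:2002.03376 — 2 statements merged into one kernel-verified Lean document; each statement's English description precedes it below -/
import Mathlib

section
/- Let F : [0,∞) → [0,∞) be continuous on [0,∞), C¹ on (0,∞), F(0)=0, x ↦ xF(x) strictly convex, and suppose x ↦ x²F'(x) is strictly increasing with limit ∞ as x → ∞. Let G : [0,∞) → [0,∞) be the inverse of x ↦ x²F'(x). Then the function x ↦ x/G(x) extends continuously to [0,∞), with value lim_{x→0⁺} x/G(x) = 0 at 0. -/
/-!
Put `H x = x² F'(x)`. Convexity of `x ↦ x F(x)` squeezes its derivative `F(x) + x F'(x)` at `x > 0`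
between the chord slopes over `[0, x]` and `[x, 2x]`, giving `0 ≤ x F'(x) ≤ 2 (F(2x) - F(x))`; by
continuity of `F` at `0` the right side tends to `0`, so `x F'(x) → 0` as `x → 0⁺`. Since `G` is
the inverse of the strictly increasing `H` with `H 0 = 0`, it is continuous on `[0, ∞)`, positive
on `(0, ∞)` and `G y → 0⁺` as `y → 0⁺`. Finally `y / G y = G y · F'(G y)` because `H (G y) = y`.
-/

open Set Filter Topology

section InverseFunction

variable {α β : Type*} [LinearOrder α] [LinearOrder β]

theorem StrictMonoOn.strictMonoOn_of_rightInvOn {f : α → β} {g : β → α} {s : Set α} {t : Set β}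
    (hf : StrictMonoOn f s) (hg : MapsTo g t s) (hfg : RightInvOn g f t) : StrictMonoOn g t :=
  fun _ hx _ hy hxy => (hf.lt_iff_lt (hg hx) (hg hy)).mp <| by rwa [hfg hx, hfg hy]

variable [TopologicalSpace α] [OrderTopology α] [TopologicalSpace β] [OrderTopology β]
  [DenselyOrdered β]

theorem StrictMonoOn.continuousOn_Ici_of_surjOn {f : α → β} {a : α}
    (hf : StrictMonoOn f (Ici a)) (hsurj : SurjOn f (Ici a) (Ici (f a))) :
    ContinuousOn f (Ici a) := by
  intro x hx
  rcases (mem_Ici.mp hx).eq_or_lt with rfl | hax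
  · exact hf.continuousWithinAt_right_of_surjOn self_mem_nhdsWithin
      (hsurj.mono subset_rfl Ioi_subset_Ici_self)
  · refine (hf.continuousAt_of_image_mem_nhds (Ici_mem_nhds hax) ?_).continuousWithinAt
    exact mem_of_superset (Ici_mem_nhds (hf le_rfl hx hax)) hsurj

end InverseFunction

section ImpactFunction

variable {F : ℝ → ℝ} {x : ℝ}

theorem mul_deriv_mem_Icc_of_convexOn (hconv : ConvexOn ℝ (Ici 0) fun x => x * F x)
    (hx : 0 < x) (hd : DifferentiableAt ℝ F x) :
    x * deriv F x ∈ Icc 0 (2 * (F (2 * x) - F x)) := by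
  have hderiv : HasDerivAt (fun y => y * F y) (F x + x * deriv F x) x := by
    simpa using (hasDerivAt_id' x).fun_mul hd.hasDerivAt
  have hleft := hconv.slope_le_of_hasDerivAt self_mem_Ici hx.le hx hderiv
  have hright := hconv.le_slope_of_hasDerivAt hx.le
    (show 2 * x ∈ Ici 0 from mem_Ici.mpr (by linarith)) (show x < 2 * x by linarith) hderiv
  rw [slope_def_field] at hleft hright
  have hleft' : (x * F x - 0 * F 0) / (x - 0) = F x := by field_simp [hx.ne']; ring
  have hright' : (2 * x * F (2 * x) - x * F x) / (2 * x - x) = 2 * F (2 * x) - F x := by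
    field_simp [hx.ne']; ring
  constructor <;> linarith

theorem tendsto_mul_deriv_nhdsGT_zero (hcont : ContinuousWithinAt F (Ici 0) 0)
    (hconv : ConvexOn ℝ (Ici 0) fun x => x * F x)
    (hdiff : ∀ x ∈ Ioi (0 : ℝ), DifferentiableAt ℝ F x) :
    Tendsto (fun x => x * deriv F x) (𝓝[>] 0) (𝓝 0) := by
  have hdouble : ContinuousWithinAt (fun x => F (2 * x)) (Ici 0) 0 :=
    hcont.comp_of_eq (by fun_prop) (fun y (hy : 0 ≤ y) => mem_Ici.mpr (by linarith)) (by simp)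
  have hupper : Tendsto (fun x => 2 * (F (2 * x) - F x)) (𝓝[>] 0) (𝓝 0) := by
    simpa using ((hdouble.sub hcont).const_mul 2).mono Ioi_subset_Ici_self |>.tendsto
  refine tendsto_of_tendsto_of_tendsto_of_le_of_le' tendsto_const_nhds hupper ?_ ?_ <;>
    filter_upwards [self_mem_nhdsWithin] with x hx
  exacts [(mul_deriv_mem_Icc_of_convexOn hconv hx (hdiff x hx)).1,
    (mul_deriv_mem_Icc_of_convexOn hconv hx (hdiff x hx)).2]

end ImpactFunction

theorem stmt8_general (F G : ℝ → ℝ)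
    (hF_cont : ContinuousOn F (Ici 0))
    (hF_diff : ∀ x ∈ Ioi (0:ℝ), DifferentiableAt ℝ F x)
    (hconv : StrictConvexOn ℝ (Ici 0) (fun x => x * F x))
    (hmono : StrictMonoOn (fun x => x ^ 2 * deriv F x) (Ici 0))
    (hG_nonneg : ∀ x ∈ Ici (0:ℝ), 0 ≤ G x)
    (hG_left : ∀ x ∈ Ici (0:ℝ), G (x ^ 2 * deriv F x) = x)
    (hG_right : ∀ y ∈ Ici (0:ℝ), (G y) ^ 2 * deriv F (G y) = y) :
    Tendsto (fun x => x / G x) (𝓝[>] 0) (𝓝 0) ∧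
    ContinuousOn (fun x => x / G x) (Ici 0) := by
  have hG_mono : StrictMonoOn G (Ici 0) := hmono.strictMonoOn_of_rightInvOn hG_nonneg hG_right
  have hG_zero : G 0 = 0 := by simpa using hG_left 0 self_mem_Ici
  have hH_nonneg : MapsTo (fun x => x ^ 2 * deriv F x) (Ici 0) (Ici 0) := fun x hx => by
    simpa using hmono.monotoneOn self_mem_Ici hx hx
  have hG_cont : ContinuousOn G (Ici 0) :=
    hG_mono.continuousOn_Ici_of_surjOn <| by
      rw [hG_zero]; exact LeftInvOn.surjOn (f := fun x => x ^ 2 * deriv F x) hG_left hH_nonneg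
  have hG_pos : ∀ y ∈ Ioi (0 : ℝ), 0 < G y := fun y hy =>
    hG_zero ▸ hG_mono self_mem_Ici (Ioi_subset_Ici_self hy) hy
  have hG_tendsto : Tendsto G (𝓝[>] 0) (𝓝[>] 0) := by
    refine tendsto_nhdsWithin_iff.mpr ⟨?_, eventually_mem_nhdsWithin.mono hG_pos⟩
    simpa [hG_zero] using ((hG_cont 0 self_mem_Ici).mono Ioi_subset_Ici_self).tendsto
  have hlim : Tendsto (fun x => x / G x) (𝓝[>] 0) (𝓝 0) := by
    refine ((tendsto_mul_deriv_nhdsGT_zero (hF_cont 0 self_mem_Ici) hconv.convexOn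
      hF_diff).comp hG_tendsto).congr' ?_
    filter_upwards [self_mem_nhdsWithin] with y hy
    rw [Function.comp_apply, eq_div_iff (hG_pos y hy).ne']
    linear_combination hG_right y (Ioi_subset_Ici_self hy)
  refine ⟨hlim, fun x hx => ?_⟩
  rcases (mem_Ici.mp hx).eq_or_lt with rfl | hx_pos
  · exact continuousWithinAt_Ioi_iff_Ici.mp (by simpa [ContinuousWithinAt] using hlim)
  · exact continuousWithinAt_id.div (hG_cont x hx) (hG_pos x hx_pos).ne'

/-- Under the standing assumptions on the impact function `F`, with `G` the
inverse of `x ↦ x² F'(x)`, the map `x ↦ x / G x` extends continuously to `[0,∞)` with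
value `0` at `0` (note that in Lean `0 / G 0 = 0`, so the extension is the map itself). -/
theorem stmt8 (F G : ℝ → ℝ)
    (hF_nonneg : ∀ x ∈ Ici (0:ℝ), 0 ≤ F x)
    (hF_cont : ContinuousOn F (Ici 0))
    (hF_diff : ∀ x ∈ Ioi (0:ℝ), DifferentiableAt ℝ F x)
    (hF_derivCont : ContinuousOn (deriv F) (Ioi 0))
    (hF0 : F 0 = 0)
    (hconv : StrictConvexOn ℝ (Ici 0) (fun x => x * F x))
    (hmono : StrictMonoOn (fun x => x ^ 2 * deriv F x) (Ici 0))
    (htop : Tendsto (fun x => x ^ 2 * deriv F x) atTop atTop)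
    (hG_nonneg : ∀ x ∈ Ici (0:ℝ), 0 ≤ G x)
    (hG_left : ∀ x ∈ Ici (0:ℝ), G (x ^ 2 * deriv F x) = x)
    (hG_right : ∀ y ∈ Ici (0:ℝ), (G y) ^ 2 * deriv F (G y) = y) :
    Tendsto (fun x => x / G x) (𝓝[>] 0) (𝓝 0) ∧
    ContinuousOn (fun x => x / G x) (Ici 0) :=
  stmt8_general F G hF_cont hF_diff hconv hmono hG_nonneg hG_left hG_right
end

section
/- Let F : [0,∞) → [0,∞) be C¹ on (0,∞) with F(0) = 0 and x ↦ xF(x) strictly convex, let G be the inverse of x ↦ x²F'(x), let A > 0 and y ≥ 0 with κ_A(y) ≥ 0. Set x* = G(κ_A(y)/A) and v'(y) = κ_A(y)/G(κ_A(y)/A) + A·F(G(κ_A(y)/A)). Then x* satisfies the first-order condition A·x*·F'(x*) + A·F(x*) − v'(y) = 0, and moreover κ_A(y) + A·x*·F(x*) − x*·v'(y) = 0. Consequently, v solves the Hamilton–Jacobi–Bellman equation κ_A(y) + inf_{x ≥ 0} { A x F(x) − x v'(y) } = 0. -/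
/-!
Since `G` inverts `x ↦ x² F'(x)`, the point `x* = G(κ/A)` satisfies `A x*² F'(x*) = κ`, which
gives both identities; when `x* = 0` this forces `κ = 0`, matching Lean's convention `κ / 0 = 0`.
For the infimum, `v'(y) / A = F(x*) + x* F'(x*)` is the derivative of `x ↦ x F(x)` at `x*`, so by
convexity its tangent line at `x*` lies below it and the infimum is attained at `x*`, with value
`-κ`. At `x* = 0`, where `F` need not be differentiable, `v'(y) = 0` and `x F(x) ≥ 0` suffices.
-/

open Set Filter Topology

lemma ConvexOn.add_mul_sub_le_of_hasDerivAt {S : Set ℝ} {f : ℝ → ℝ} {x y f' : ℝ}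
    (hf : ConvexOn ℝ S f) (hx : x ∈ S) (hy : y ∈ S) (hf' : HasDerivAt f f' x) :
    f x + f' * (y - x) ≤ f y := by
  rcases lt_trichotomy x y with hxy | rfl | hyx
  · have hslope := hf.le_slope_of_hasDerivAt hx hy hxy hf'
    rw [slope_def_field, le_div_iff₀ (sub_pos.2 hxy)] at hslope
    linarith
  · simp
  · have hslope := hf.slope_le_of_hasDerivAt hy hx hyx hf'
    rw [slope_def_field, div_le_iff₀ (sub_pos.2 hyx)] at hslope
    linarith

lemma csInf_image_sub_mul_eq_of_tangent_le {s : Set ℝ} {φ : ℝ → ℝ} {a c : ℝ}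
    (ha : a ∈ s) (htangent : ∀ x ∈ s, φ a + c * (x - a) ≤ φ x) :
    sInf ((fun x => φ x - x * c) '' s) = φ a - a * c :=
  IsLeast.csInf_eq
    ⟨mem_image_of_mem _ ha, by rintro _ ⟨x, hx, rfl⟩; linarith [htangent x hx]⟩

lemma tangent_le_mul_apply_of_convexOn {F : ℝ → ℝ}
    (hF_nonneg : ∀ x ∈ Ici (0:ℝ), 0 ≤ F x)
    (hF_diff : ∀ x ∈ Ioi (0:ℝ), DifferentiableAt ℝ F x)
    (hF0 : F 0 = 0) (hconv : ConvexOn ℝ (Ici 0) (fun x => x * F x))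
    {a x : ℝ} (ha : 0 ≤ a) (hx : 0 ≤ x) :
    a * F a + (F a + a * deriv F a) * (x - a) ≤ x * F x := by
  rcases ha.eq_or_lt with rfl | ha
  · simpa [hF0] using mul_nonneg hx (hF_nonneg x hx)
  · have hderiv : HasDerivAt (fun x => x * F x) (1 * F a + a * deriv F a) a :=
      (hasDerivAt_id a).mul (hF_diff a ha).hasDerivAt
    rw [one_mul] at hderiv
    exact hconv.add_mul_sub_le_of_hasDerivAt ha.le hx hderiv

theorem stmt10_general (F G κA : ℝ → ℝ) (A y : ℝ) (hA : 0 < A)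
    (hF_nonneg : ∀ x ∈ Ici (0:ℝ), 0 ≤ F x)
    (hF_diff : ∀ x ∈ Ioi (0:ℝ), DifferentiableAt ℝ F x)
    (hF0 : F 0 = 0)
    (hconv : StrictConvexOn ℝ (Ici 0) (fun x => x * F x))
    (hG_nonneg : ∀ x ∈ Ici (0:ℝ), 0 ≤ G x)
    (hG_right : ∀ u ∈ Ici (0:ℝ), (G u) ^ 2 * deriv F (G u) = u)
    (hκy : 0 ≤ κA y) :
    (A * G (κA y / A) * deriv F (G (κA y / A)) + A * F (G (κA y / A)) -
        (κA y / G (κA y / A) + A * F (G (κA y / A))) = 0) ∧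
    (κA y + A * G (κA y / A) * F (G (κA y / A)) -
        G (κA y / A) * (κA y / G (κA y / A) + A * F (G (κA y / A))) = 0) ∧
    (κA y + sInf ((fun x => A * x * F x -
        x * (κA y / G (κA y / A) + A * F (G (κA y / A)))) '' Ici 0) = 0) := by
  set k := κA y
  set g := G (k / A)
  have hkA : 0 ≤ k / A := div_nonneg hκy hA.le
  have hk : k = A * g ^ 2 * deriv F g := by
    rw [mul_assoc, hG_right _ hkA, mul_div_cancel₀ _ hA.ne']
  have hfoc : A * g * deriv F g = k / g := by
    rcases eq_or_ne g 0 with hg | hg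
    · simp [hg]
    · rw [hk]; field_simp
  have hgk : g * (k / g) = k := by rw [← hfoc, hk]; ring
  refine ⟨by rw [← hfoc]; ring, by linear_combination -hgk, ?_⟩
  have hg : g ∈ Ici 0 := hG_nonneg _ hkA
  have htangent :
      ∀ x ∈ Ici (0:ℝ), A * g * F g + (k / g + A * F g) * (x - g) ≤ A * x * F x := by
    intro x hx
    have hF_tangent := tangent_le_mul_apply_of_convexOn hF_nonneg hF_diff hF0 hconv.convexOn hg hx
    rw [← hfoc]
    linarith [mul_le_mul_of_nonneg_left hF_tangent hA.le]
  rw [csInf_image_sub_mul_eq_of_tangent_le (φ := fun x => A * x * F x) hg htangent]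
  linear_combination -hgk

/-- With `x* = G(κ_A(y)/A)` and
`v'(y) = κ_A(y)/G(κ_A(y)/A) + A·F(G(κ_A(y)/A))`, the first-order condition
`A x* F'(x*) + A F(x*) − v'(y) = 0` holds, as well as
`κ_A(y) + A x* F(x*) − x* v'(y) = 0`; consequently `v` solves the HJB equation
`κ_A(y) + inf_{x ≥ 0} { A x F(x) − x v'(y) } = 0`. -/
theorem stmt10 (F G κA : ℝ → ℝ) (A y : ℝ) (hA : 0 < A) (hy : 0 ≤ y)
    (hF_nonneg : ∀ x ∈ Ici (0:ℝ), 0 ≤ F x)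
    (hF_cont : ContinuousOn F (Ici 0))
    (hF_diff : ∀ x ∈ Ioi (0:ℝ), DifferentiableAt ℝ F x)
    (hF_derivCont : ContinuousOn (deriv F) (Ioi 0))
    (hF0 : F 0 = 0)
    (hconv : StrictConvexOn ℝ (Ici 0) (fun x => x * F x))
    (hmono : StrictMonoOn (fun x => x ^ 2 * deriv F x) (Ici 0))
    (htop : Tendsto (fun x => x ^ 2 * deriv F x) atTop atTop)
    (hG_nonneg : ∀ x ∈ Ici (0:ℝ), 0 ≤ G x)
    (hG_left : ∀ x ∈ Ici (0:ℝ), G (x ^ 2 * deriv F x) = x)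
    (hG_right : ∀ u ∈ Ici (0:ℝ), (G u) ^ 2 * deriv F (G u) = u)
    (hκy : 0 ≤ κA y) :
    (A * G (κA y / A) * deriv F (G (κA y / A)) + A * F (G (κA y / A)) -
        (κA y / G (κA y / A) + A * F (G (κA y / A))) = 0) ∧
    (κA y + A * G (κA y / A) * F (G (κA y / A)) -
        G (κA y / A) * (κA y / G (κA y / A) + A * F (G (κA y / A))) = 0) ∧
    (κA y + sInf ((fun x => A * x * F x -
        x * (κA y / G (κA y / A) + A * F (G (κA y / A)))) '' Ici 0) = 0) :=
  stmt10_general F G κA A y hA hF_nonneg hF_diff hF0 hconv hG_nonneg hG_right hκy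
end
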